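/- arXiv:1706.05611 — 6 statements merged into one kernel-verified Lean document; each statement's English description precedes it below -/
import Mathlib

section
/- Let G be a finite group, M a normal subgroup of G with trivial centre, and C = C_G(M). Then for any g ∈ C and h ∈ M, the conjugacy class size |(gh)^G| is divisible by both |g^C| (the size of the conjugacy class of g in C) and |h^M| (the size of the conjugacy class of h in M). -/
/-!
The `G`-centralizer of `g * h` meets `C` in `C_C(g)` and meets `M` in `C_M(h)`, because `h` and `g`
commute with everything in `C` and `M` respectively. So `|g^C| = |C : C ∩ C_G(gh)|` and
`|h^M| = |M : M ∩ C_G(gh)|`, and for a normal subgroup `N` and any `S` the index `|N : N ∩ S|` equals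
`|NS : S|`, which divides `|G : S| = |(gh)^G|`.
-/

namespace Subgroup

variable {G : Type*} [Group G]

theorem relIndex_sup_left_of_normal (H N : Subgroup G) [N.Normal] :
    H.relIndex (N ⊔ H) = H.relIndex N := by
  refine (Nat.card_congr (Equiv.ofBijective (quotientSubgroupOfEmbeddingOfLE H le_sup_left)
    ⟨(quotientSubgroupOfEmbeddingOfLE H _).injective, ?_⟩)).symm
  intro q
  obtain ⟨⟨x, hx⟩, rfl⟩ := QuotientGroup.mk_surjective q
  obtain ⟨n, hn, k, hk, rfl⟩ := mem_sup_of_normal_left.mp hx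
  refine ⟨QuotientGroup.mk ⟨n, hn⟩, ?_⟩
  rw [quotientSubgroupOfEmbeddingOfLE_apply_mk, QuotientGroup.eq, mem_subgroupOf]
  simpa using hk

theorem relIndex_dvd_index_of_normal_right (H N : Subgroup G) [N.Normal] :
    H.relIndex N ∣ H.index :=
  relIndex_sup_left_of_normal H N ▸ relIndex_dvd_index_of_le le_sup_right

theorem nat_card_isConj_eq_index_centralizer (x : G) :
    Nat.card {y : G // IsConj x y} = (centralizer {x}).index :=
  calc Nat.card {y : G // IsConj x y} = (MulAction.orbit (ConjAct G) x).ncard := by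
        rw [← Nat.card_coe_set_eq]
        exact Nat.card_congr <| Equiv.subtypeEquivRight fun y => by
          rw [ConjAct.mem_orbit_conjAct, isConj_comm]
    _ = (MulAction.stabilizer (ConjAct G) x).index := (MulAction.index_stabilizer _ x).symm
    _ = (centralizer {x}).index := by rw [ConjAct.stabilizer_eq_centralizer]; rfl

theorem nat_card_isConj_dvd_of_centralizer_eq {N : Subgroup G} [N.Normal] {x : N} {z : G}
    (hxz : centralizer {x} = (centralizer {z}).subgroupOf N) :
    Nat.card {y : N // IsConj x y} ∣ Nat.card {y : G // IsConj z y} := by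
  rw [nat_card_isConj_eq_index_centralizer, nat_card_isConj_eq_index_centralizer, hxz]
  exact relIndex_dvd_index_of_normal_right _ N

theorem centralizer_mul_right_subgroupOf {H : Subgroup G} {x y : G} (hx : x ∈ H)
    (hy : ∀ c ∈ H, Commute c y) :
    (centralizer {x * y}).subgroupOf H = centralizer {⟨x, hx⟩} := by
  ext ⟨c, hc⟩
  rw [mem_subgroupOf, mem_centralizer_singleton_iff, mem_centralizer_singleton_iff,
    Subtype.ext_iff]
  change Commute c (x * y) ↔ Commute c x
  exact ⟨fun h => by simpa using h.mul_right (hy c hc).inv_right, fun h => h.mul_right (hy c hc)⟩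

theorem centralizer_mul_left_subgroupOf {H : Subgroup G} {x y : G} (hx : x ∈ H)
    (hy : ∀ c ∈ H, Commute c y) :
    (centralizer {y * x}).subgroupOf H = centralizer {⟨x, hx⟩} := by
  ext ⟨c, hc⟩
  rw [mem_subgroupOf, mem_centralizer_singleton_iff, mem_centralizer_singleton_iff,
    Subtype.ext_iff]
  change Commute c (y * x) ↔ Commute c x
  exact ⟨fun h => by simpa using (hy c hc).inv_right.mul_right h, (hy c hc).mul_right⟩

end Subgroup

theorem stmt_2_general {G : Type*} [Group G] (M : Subgroup G) [M.Normal]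
    (C : Subgroup G)
    (hC : C = Subgroup.centralizer (M : Set G))
    (g h : G) (hg : g ∈ C) (hh : h ∈ M) :
    (Nat.card {y : C // IsConj (⟨g, hg⟩ : C) y} ∣
        Nat.card {y : G // IsConj (g * h) y}) ∧
      (Nat.card {y : M // IsConj (⟨h, hh⟩ : M) y} ∣
        Nat.card {y : G // IsConj (g * h) y}) := by
  subst hC
  have hgM : ∀ m ∈ M, Commute m g := Subgroup.mem_centralizer_iff.mp hg
  have hCh : ∀ c ∈ Subgroup.centralizer (M : Set G), Commute c h :=
    fun c hc => (Subgroup.mem_centralizer_iff.mp hc h hh).symm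
  exact ⟨Subgroup.nat_card_isConj_dvd_of_centralizer_eq
      (Subgroup.centralizer_mul_right_subgroupOf hg hCh).symm,
    Subgroup.nat_card_isConj_dvd_of_centralizer_eq
      (Subgroup.centralizer_mul_left_subgroupOf hh hgM).symm⟩

theorem stmt_2 {G : Type*} [Group G] [Fintype G] (M : Subgroup G) [M.Normal]
    (hZ : Subgroup.center M = ⊥) (C : Subgroup G)
    (hC : C = Subgroup.centralizer (M : Set G))
    (g h : G) (hg : g ∈ C) (hh : h ∈ M) :
    (Nat.card {y : C // IsConj (⟨g, hg⟩ : C) y} ∣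
        Nat.card {y : G // IsConj (g * h) y}) ∧
      (Nat.card {y : M // IsConj (⟨h, hh⟩ : M) y} ∣
        Nat.card {y : G // IsConj (g * h) y}) :=
  stmt_2_general M C hC g h hg hh
end

section
/- Let G be a finite group and p a prime. If p does not divide the size of any conjugacy class of G, then G has a central Sylow p-subgroup, i.e., a Sylow p-subgroup of G is contained in the centre of G. -/
/-!
The centralizer of `g` has index the size of the class of `g`, which is prime to `p`, so it
contains a Sylow `p`-subgroup; hence every element of `G` fixes some point of the conjugation
action of `G` on its Sylow `p`-subgroups. That action is transitive, and a transitive action of a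
finite group on at least two points has a fixed-point-free element (Jordan), so the Sylow
`p`-subgroup `P` is unique. Every element then centralizes `P`, i.e. `P` is central.
-/

open MulAction

theorem Subgroup.index_centralizer_singleton {G : Type*} [Group G] (g : G) :
    (Subgroup.centralizer {g}).index = Nat.card {y : G // IsConj g y} := by
  rw [centralizer_eq_comap_stabilizer]
  refine (index_comap_of_surjective _ ConjAct.toConjAct.surjective).trans ?_
  rw [index_stabilizer, ← Nat.card_coe_set_eq]
  exact Nat.card_congr <| Equiv.subtypeEquivRight fun y => by
    rw [ConjAct.mem_orbit_conjAct, isConj_comm]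

theorem Sylow.exists_le_of_not_dvd_index {G : Type*} [Group G] [Finite G] {p : ℕ} [Fact p.Prime]
    {H : Subgroup G} (hH : ¬ p ∣ H.index) : ∃ P : Sylow p G, P ≤ H := by
  obtain ⟨Q⟩ : Nonempty (Sylow p H) := Sylow.nonempty
  have hQ : ¬ p ∣ (Q.map H.subtype).index := by
    rw [Subgroup.index_map_subtype]
    exact Nat.Prime.not_dvd_mul Fact.out Q.not_dvd_index hH
  exact ⟨(Q.2.map H.subtype).toSylow hQ, Subgroup.map_subtype_le _⟩

theorem MulAction.subsingleton_of_forall_exists_smul_eq {G X : Type*} [Group G] [Fintype G]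
    [MulAction G X] [Finite X] [IsPretransitive G X] (h : ∀ g : G, ∃ x : X, g • x = x) :
    Subsingleton X := by
  classical
  -- Burnside: the fixed-point counts, each at least `1`, average to the number of orbits, `≤ 1`.
  have : Fintype X := Fintype.ofFinite X
  have hfix_pos : ∀ g : G, 1 ≤ Fintype.card (fixedBy X g) := fun g =>
    Fintype.card_pos_iff.mpr <| let ⟨x, hx⟩ := h g; ⟨⟨x, hx⟩⟩
  have hsum : ∑ g : G, Fintype.card (fixedBy X g) ≤ ∑ _g : G, 1 := by
    have : Subsingleton (orbitRel.Quotient G X) :=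
      (pretransitive_iff_subsingleton_quotient G X).mp inferInstance
    rw [sum_card_fixedBy_eq_card_orbits_mul_card_group, Finset.sum_const, smul_eq_mul, mul_one,
      Finset.card_univ]
    exact mul_le_of_le_one_left (Nat.zero_le _) (Fintype.card_le_one_iff_subsingleton.mpr this)
  have hfix_one := (Finset.sum_eq_sum_iff_of_le fun g _ => hfix_pos g).mp
    ((Finset.sum_le_sum fun g _ => hfix_pos g).antisymm hsum) 1 (Finset.mem_univ _)
  simp only [fixedBy_one_eq_univ, Fintype.card_setUniv] at hfix_one
  exact Fintype.card_le_one_iff_subsingleton.mp hfix_one.ge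

theorem Sylow.exists_mem_centralizer_of_not_dvd_card_isConj {G : Type*} [Group G] [Finite G]
    {p : ℕ} [Fact p.Prime] {g : G} (hg : ¬ p ∣ Nat.card {y : G // IsConj g y}) :
    ∃ P : Sylow p G, g ∈ Subgroup.centralizer (P : Set G) := by
  rw [← Subgroup.index_centralizer_singleton] at hg
  obtain ⟨P, hP⟩ := exists_le_of_not_dvd_index hg
  exact ⟨P, Subgroup.mem_centralizer_iff.mpr fun x hx => (hP hx g rfl).symm⟩

theorem stmt_3 {G : Type*} [Group G] [Fintype G] (p : ℕ) (hp : p.Prime)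
    (h : ∀ x : G, ¬ p ∣ Nat.card {y : G // IsConj x y}) :
    ∃ P : Sylow p G, (P : Subgroup G) ≤ Subgroup.center G := by
  have : Fact p.Prime := ⟨hp⟩
  have hcent (g : G) := Sylow.exists_mem_centralizer_of_not_dvd_card_isConj (h g)
  have : Subsingleton (Sylow p G) := subsingleton_of_forall_exists_smul_eq fun g =>
    (hcent g).imp fun P hP =>
      Sylow.smul_eq_iff_mem_normalizer.mpr (Subgroup.centralizer_le_normalizer _ hP)
  obtain ⟨P⟩ : Nonempty (Sylow p G) := Sylow.nonempty
  refine ⟨P, ?_⟩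
  rw [← SetLike.coe_subset_coe, ← Subgroup.centralizer_eq_top_iff_subset, eq_top_iff]
  intro g _
  obtain ⟨Q, hQ⟩ := hcent g
  rwa [Subsingleton.elim Q P] at hQ
end

section
/- Let E be a field of characteristic q > n (or characteristic zero), let V = E^n with Alt(n) acting by permuting coordinates, and let D = {(α₁,…,αₙ) ∈ V : α₁ + ⋯ + αₙ = 0} be the deleted permutation module. Suppose d = (α₁,…,α_{n-1}, β) ∈ D is such that α₁,…,α_{n-1} are pairwise distinct nonzero elements of E. Regard D as a module for G = E^× × Alt(n), where E^× acts by scalar multiplication. If (λ, x) ∈ G satisfies λ·(d∘x⁻¹) = d (i.e., (λ,x) fixes d), and t is the order of x, then the cycle type of x (including fixed points) is either (t,…,t) or (t,…,t,1). -/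
/-!
Write the fixing condition as `d (x i) = λ * d i`, so `d ∘ x ^ k = λ ^ k • d`. Since `d` is
injective off one coordinate, a permutation preserving `d` moves at most two points; being even,
it is trivial. Applied to `x ^ m`, where `m` is the order of `λ`, this gives `x ^ m = 1`.
Conversely every point moved by `x` has `d i ≠ 0` (only one coordinate may vanish), so a cycle of
length `c` forces `λ ^ c = 1`, i.e. `m ∣ c`. Hence every cycle has length `m = orderOf x`. When
`λ ≠ 1`, a fixed point has `d i = λ * d i`, so `d i = 0`, which happens at most once.
-/

open Equiv Finset

namespace Equiv.Perm

variable {α : Type*} [Fintype α] [DecidableEq α]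

theorem exists_apply_ne_self_pow_apply_eq_self_of_mem_cycleType {σ : Perm α} {c : ℕ}
    (hc : c ∈ σ.cycleType) : ∃ i, σ i ≠ i ∧ (σ ^ c) i = i := by
  rw [cycleType_def, Multiset.mem_map] at hc
  obtain ⟨f, hf, rfl⟩ := hc
  obtain ⟨hcyc, hagree⟩ := mem_cycleFactorsFinset_iff.mp hf
  obtain ⟨i, hi, -⟩ := hcyc
  have hf_eq : f = σ.cycleOf i := cycle_is_cycleOf (mem_support.mpr hi) hf
  refine ⟨i, hagree i (mem_support.mpr hi) ▸ hi, ?_⟩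
  rw [← pow_mod_card_support_cycleOf_self_apply, ← hf_eq, Function.comp_apply, Nat.mod_self,
    pow_zero, one_apply]

theorem eq_one_of_mem_alternatingGroup_of_injOn {β : Type*} {d : α → β} {j₀ : α}
    (hd : Set.InjOn d {j₀}ᶜ) {y : Perm α} (hy : y ∈ alternatingGroup α)
    (h : ∀ i, d (y i) = d i) : y = 1 := by
  have hsupp : y.support ⊆ {j₀, y⁻¹ j₀} := by
    intro i hi
    have hmoved : y i ≠ i := mem_support.mp hi
    by_cases hyi : y i = j₀
    · simp [← hyi]
    by_cases hi₀ : i = j₀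
    · simp [hi₀]
    exact (hmoved (hd hyi hi₀ (h i))).elim
  have hcard : #y.support ≤ 2 := (card_le_card hsupp).trans card_le_two
  have hnot_swap : #y.support ≠ 2 := fun h2 => by
    have hsign := (card_support_eq_two.mp h2).sign_eq
    rw [mem_alternatingGroup.mp hy] at hsign
    exact absurd hsign (by decide)
  exact card_support_le_one.mp (by omega)

end Equiv.Perm

section

variable {ι E : Type*} {d : ι → E} {x : Perm ι} {lam : E} {j₀ : ι}

theorem apply_pow_apply_eq_pow_mul [Monoid E] (h : ∀ i, d (x i) = lam * d i) (k : ℕ) (i : ι) :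
    d ((x ^ k) i) = lam ^ k * d i := by
  induction k with
  | zero => simp
  | succ k ih => rw [pow_succ', Perm.mul_apply, h, ih, pow_succ', mul_assoc]

theorem apply_ne_zero_of_apply_ne_self [MulZeroClass E] (hz : ∀ i ≠ j₀, d i ≠ 0)
    (h : ∀ i, d (x i) = lam * d i) {i : ι} (hi : x i ≠ i) : d i ≠ 0 := by
  intro h0
  have hx0 : d (x i) = 0 := by rw [h, h0, mul_zero]
  by_cases hi₀ : i = j₀
  · exact hz (x i) (hi₀ ▸ hi) hx0
  · exact hz i hi₀ h0

variable [Fintype ι] [DecidableEq ι] [MonoidWithZero E] [IsRightCancelMulZero E]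

theorem pow_eq_one_of_mem_cycleType (hz : ∀ i ≠ j₀, d i ≠ 0) (h : ∀ i, d (x i) = lam * d i)
    {c : ℕ} (hc : c ∈ x.cycleType) : lam ^ c = 1 := by
  obtain ⟨i, hi, hxc⟩ := Perm.exists_apply_ne_self_pow_apply_eq_self_of_mem_cycleType hc
  have hd : lam ^ c * d i = 1 * d i := by rw [← apply_pow_apply_eq_pow_mul h, hxc, one_mul]
  exact mul_right_cancel₀ (apply_ne_zero_of_apply_ne_self hz h hi) hd

theorem card_filter_apply_eq_self_le_one (hz : ∀ i ≠ j₀, d i ≠ 0)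
    (h : ∀ i, d (x i) = lam * d i) (hlam : lam ≠ 1) : #{i | x i = i} ≤ 1 := by
  refine card_le_one.mpr fun i hi j hj => ?_
  have eq_j₀ : ∀ k, x k = k → k = j₀ := fun k hk => by
    by_contra hk₀
    have hd : lam * d k = 1 * d k := by rw [← h, hk, one_mul]
    exact hlam (mul_right_cancel₀ (hz k hk₀) hd)
  rw [eq_j₀ i (mem_filter.mp hi).2, eq_j₀ j (mem_filter.mp hj).2]

theorem cycleType_eq_orderOf_of_apply_eq_mul (hinj : Set.InjOn d {j₀}ᶜ)
    (hz : ∀ i ≠ j₀, d i ≠ 0) (hx : x ∈ alternatingGroup ι) (h : ∀ i, d (x i) = lam * d i) :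
    (∀ c ∈ x.cycleType, c = orderOf x) ∧ (#{i | x i = i} ≤ 1 ∨ x = 1) := by
  have hxm : x ^ orderOf lam = 1 :=
    Perm.eq_one_of_mem_alternatingGroup_of_injOn hinj (pow_mem hx _) fun i => by
      rw [apply_pow_apply_eq_pow_mul h, pow_orderOf_eq_one, one_mul]
  have hxm_dvd : orderOf x ∣ orderOf lam := orderOf_dvd_of_pow_eq_one hxm
  refine ⟨fun c hc => ?_, ?_⟩
  · have hmc : orderOf lam ∣ c := orderOf_dvd_of_pow_eq_one (pow_eq_one_of_mem_cycleType hz h hc)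
    exact Nat.dvd_antisymm (Perm.dvd_of_mem_cycleType hc) (hxm_dvd.trans hmc)
  · by_cases hlam : lam = 1
    · subst hlam
      exact .inr (by simpa using hxm)
    · exact .inl (card_filter_apply_eq_self_le_one hz h hlam)

end

theorem stmt_7_general {E : Type*} [Field E] (n : ℕ)
    (d : Fin n → E)
    (hdistinct : ∀ i j : Fin n, (i : ℕ) < n - 1 → (j : ℕ) < n - 1 → i ≠ j → d i ≠ d j)
    (hne : ∀ i : Fin n, (i : ℕ) < n - 1 → d i ≠ 0)
    (x : Equiv.Perm (Fin n)) (hx : x ∈ alternatingGroup (Fin n))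
    (lam : Eˣ) (hfix : ∀ i, (lam : E) * d (x⁻¹ i) = d i) :
    (∀ c ∈ x.cycleType, c = orderOf x) ∧
      ((Finset.univ.filter fun i => x i = i).card ≤ 1 ∨ x = 1) := by
  obtain _ | n := n
  · exact ⟨by simp [Subsingleton.elim x 1], .inr (Subsingleton.elim x 1)⟩
  have lt_of_ne_last : ∀ i : Fin (n + 1), i ≠ Fin.last n → (i : ℕ) < n + 1 - 1 :=
    fun i hi => by simpa using Fin.val_lt_last hi
  have hstep : ∀ i, d (x i) = lam * d i := fun i => by simpa using (hfix (x i)).symm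
  refine cycleType_eq_orderOf_of_apply_eq_mul (j₀ := Fin.last n) ?_ ?_ hx hstep
  · exact fun i hi j hj hij =>
      by_contra (hdistinct i j (lt_of_ne_last i hi) (lt_of_ne_last j hj) · hij)
  · exact fun i hi => hne i (lt_of_ne_last i hi)

theorem stmt_7 {E : Type*} [Field E] (n : ℕ) (hn : 2 ≤ n)
    (hchar : ringChar E = 0 ∨ n < ringChar E)
    (d : Fin n → E) (hsum : ∑ i, d i = 0)
    (hdistinct : ∀ i j : Fin n, (i : ℕ) < n - 1 → (j : ℕ) < n - 1 → i ≠ j → d i ≠ d j)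
    (hne : ∀ i : Fin n, (i : ℕ) < n - 1 → d i ≠ 0)
    (x : Equiv.Perm (Fin n)) (hx : x ∈ alternatingGroup (Fin n))
    (lam : Eˣ) (hfix : ∀ i, (lam : E) * d (x⁻¹ i) = d i) :
    (∀ c ∈ x.cycleType, c = orderOf x) ∧
      ((Finset.univ.filter fun i => x i = i).card ≤ 1 ∨ x = 1) :=
  stmt_7_general n d hdistinct hne x hx lam hfix
end

section
/- Let G be a finite group acting faithfully on a finite abelian group A with gcd(|G|, |A|) = 1, and suppose G is abelian. Then G has a regular orbit on A, i.e., there exists a ∈ A with C_G(a) = 1. -/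
/-!
Induct on the order of a `G`-invariant subgroup `B ≤ A`, looking for `b ∈ B` whose stabilizer
acts trivially on `B`. If every `g` with a nontrivial fixed point in `B` acts trivially on `B`,
any `b ≠ 1` will do. Otherwise some `s` fixes `c ≠ 1` but moves an element of `B`. Coprimality
gives the Fitting decomposition `B = C_B(s) × [B, s]` through the norm `N x = ∏_{i < |s|} sⁱ • x`:
it maps `B` into `C_B(s)`, kills `[B, s]`, and agrees with `x ↦ x ^ |s|` modulo `[B, s]`, a map
that is bijective. Both factors are proper and, since `G` is abelian, `G`-invariant; if `c'` and
`d` work for them, then `c' * d` works for `B`.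
-/

open Finset

theorem Subgroup.mem_of_pow_mem_of_coprime {G : Type*} [Group G] {H : Subgroup G} {n : ℕ}
    (hn : n.Coprime (Nat.card G)) {x : G} (hx : x ^ n ∈ H) : x ∈ H := by
  have hzpow := H.zpow_mem hx ((Nat.card G).gcdB n)
  rwa [← powCoprime_apply hn.symm, ← powCoprime_symm_apply hn.symm, Equiv.symm_apply_apply]
    at hzpow

theorem Subgroup.card_lt_card_of_lt {G : Type*} [Group G] [Finite G] {H K : Subgroup G}
    (h : H < K) : Nat.card H < Nat.card K :=
  Set.Finite.card_lt_card (Set.toFinite _) (SetLike.coe_ssubset_coe.2 h)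

namespace MulDistribMulAction

section Group

variable {G A : Type*} [Group G] [CommGroup A] [MulDistribMulAction G A]

variable (A) in
def commutatorMap (g : G) : A →* A := toMonoidHom A g / MonoidHom.id A

@[simp]
theorem commutatorMap_apply (g : G) (x : A) : commutatorMap A g x = g • x / x := rfl

theorem mem_ker_commutatorMap {g : G} {x : A} : x ∈ (commutatorMap A g).ker ↔ g • x = x := by
  rw [MonoidHom.mem_ker, commutatorMap_apply, div_eq_one]

theorem commutatorMap_smul {g h : G} (hgh : Commute g h) (x : A) :
    commutatorMap A g (h • x) = h • commutatorMap A g x := by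
  rw [commutatorMap_apply, commutatorMap_apply, smul_div', smul_smul, smul_smul, hgh.eq]

theorem smul_mem_inf_ker_commutatorMap {g h : G} (hgh : Commute g h) {B : Subgroup A}
    (hB : ∀ x ∈ B, h • x ∈ B) {x : A} (hx : x ∈ B ⊓ (commutatorMap A g).ker) :
    h • x ∈ B ⊓ (commutatorMap A g).ker :=
  Subgroup.mem_inf.2 ⟨hB x hx.1, by
    rw [MonoidHom.mem_ker, commutatorMap_smul hgh, MonoidHom.mem_ker.1 hx.2, smul_one]⟩

theorem smul_mem_map_commutatorMap {g h : G} (hgh : Commute g h) {B : Subgroup A}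
    (hB : ∀ x ∈ B, h • x ∈ B) {x : A} (hx : x ∈ B.map (commutatorMap A g)) :
    h • x ∈ B.map (commutatorMap A g) := by
  obtain ⟨w, hw, rfl⟩ := hx
  exact ⟨h • w, hB w hw, commutatorMap_smul hgh w⟩

theorem smul_eq_and_smul_eq_of_smul_mul_eq {g : G} {C D : Subgroup A} (hCD : Disjoint C D)
    (hC : ∀ x ∈ C, g • x ∈ C) (hD : ∀ x ∈ D, g • x ∈ D) {c d : A} (hc : c ∈ C) (hd : d ∈ D)
    (hg : g • (c * d) = c * d) : g • c = c ∧ g • d = d := by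
  have := Subgroup.mul_injective_of_disjoint hCD
    (a₁ := (⟨g • c, hC c hc⟩, ⟨g • d, hD d hd⟩)) (a₂ := (⟨c, hc⟩, ⟨d, hd⟩))
    (by simpa [smul_mul'] using hg)
  simpa [Prod.ext_iff] using this

theorem pow_smul_mem {g : G} {B : Subgroup A} (hB : ∀ x ∈ B, g • x ∈ B) {x : A} (hx : x ∈ B) :
    ∀ i : ℕ, g ^ i • x ∈ B
  | 0 => by simpa
  | i + 1 => by rw [pow_succ', mul_smul]; exact hB _ (pow_smul_mem hB hx i)

noncomputable def smulNorm (g : G) (x : A) : A := ∏ i ∈ range (orderOf g), g ^ i • x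

theorem smulNorm_commutatorMap (g : G) (w : A) : smulNorm g (commutatorMap A g w) = 1 := by
  simp only [smulNorm, commutatorMap_apply, smul_div', smul_smul, ← pow_succ]
  rw [prod_range_div (fun i => g ^ i • w), pow_orderOf_eq_one, pow_zero, div_self']

theorem smulNorm_of_smul_eq {g : G} {y : A} (hy : g • y = y) : smulNorm g y = y ^ orderOf g := by
  have hpow (i : ℕ) : g ^ i • y = y := by
    simpa using MulAction.fixedBy_subset_fixedBy_zpow A g i hy
  simp [smulNorm, hpow]

theorem smulNorm_mem_ker (g : G) (x : A) : smulNorm g x ∈ (commutatorMap A g).ker := by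
  rw [MonoidHom.mem_ker, smulNorm, map_prod]
  exact (prod_congr rfl fun i _ => commutatorMap_smul ((Commute.refl g).pow_right i) x).trans
    (smulNorm_commutatorMap g x)

theorem disjoint_ker_range_commutatorMap {g : G} (hg : (orderOf g).Coprime (Nat.card A)) :
    Disjoint (commutatorMap A g).ker (commutatorMap A g).range := by
  rw [Subgroup.disjoint_def]
  rintro _ hy ⟨w, rfl⟩
  have hpow : commutatorMap A g w ^ orderOf g = 1 := by
    rw [← smulNorm_of_smul_eq (mem_ker_commutatorMap.1 hy), smulNorm_commutatorMap]
  exact Subgroup.mem_bot.1 (Subgroup.mem_of_pow_mem_of_coprime hg (hpow ▸ one_mem _))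

theorem commutatorMap_pow_mem_map {g : G} {B : Subgroup A} (hB : ∀ x ∈ B, g • x ∈ B) {x : A}
    (hx : x ∈ B) : ∀ i : ℕ, commutatorMap A (g ^ i) x ∈ B.map (commutatorMap A g)
  | 0 => by simp
  | i + 1 => by
    have hsplit : commutatorMap A (g ^ (i + 1)) x =
        commutatorMap A g (g ^ i • x) * commutatorMap A (g ^ i) x := by
      simp only [commutatorMap_apply, pow_succ', mul_smul, div_mul_div_cancel]
    rw [hsplit]
    exact mul_mem ⟨_, pow_smul_mem hB hx i, rfl⟩ (commutatorMap_pow_mem_map hB hx i)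

theorem le_inf_ker_sup_map_commutatorMap {g : G} (hg : (orderOf g).Coprime (Nat.card A))
    {B : Subgroup A} (hB : ∀ x ∈ B, g • x ∈ B) :
    B ≤ (B ⊓ (commutatorMap A g).ker) ⊔ B.map (commutatorMap A g) := by
  intro x hx
  refine Subgroup.mem_of_pow_mem_of_coprime hg ?_
  have hnorm : smulNorm g x ∈ B ⊓ (commutatorMap A g).ker :=
    ⟨prod_mem fun i _ => pow_smul_mem hB hx i, smulNorm_mem_ker g x⟩
  have hrest : smulNorm g x / x ^ orderOf g ∈ B.map (commutatorMap A g) := by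
    have hprod :
        smulNorm g x / x ^ orderOf g = ∏ i ∈ range (orderOf g), commutatorMap A (g ^ i) x := by
      simp [smulNorm, prod_div_distrib]
    rw [hprod]
    exact prod_mem fun i _ => commutatorMap_pow_mem_map hB hx i
  have hsplit : x ^ orderOf g = smulNorm g x * (smulNorm g x / x ^ orderOf g)⁻¹ := by
    rw [inv_div, mul_div_cancel]
  rw [hsplit]
  exact mul_mem (Subgroup.mem_sup_left hnorm) (inv_mem (Subgroup.mem_sup_right hrest))

end Group

section CommGroup

variable {G A : Type*} [CommGroup G] [CommGroup A] [MulDistribMulAction G A] [Finite A]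

theorem exists_mem_forall_smul_eq_le_ker (hG : ∀ g : G, (orderOf g).Coprime (Nat.card A))
    (B : Subgroup A) (hB : ∀ g : G, ∀ x ∈ B, g • x ∈ B) :
    ∃ b ∈ B, ∀ g : G, g • b = b → B ≤ (commutatorMap A g).ker := by
  induction hn : Nat.card B using Nat.strong_induction_on generalizing B with
  | _ n ih =>
  by_cases hfree : ∀ g : G, ∀ c ∈ B, c ≠ 1 → g • c = c → B ≤ (commutatorMap A g).ker
  · obtain rfl | ⟨b, hb, hb1⟩ := B.bot_or_exists_ne_one
    · exact ⟨1, one_mem _, fun _ _ => bot_le⟩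
    · exact ⟨b, hb, fun g => hfree g b hb hb1⟩
  push Not at hfree
  obtain ⟨s, c, hcB, hc1, hsc, hsB⟩ := hfree
  have hdisj := disjoint_ker_range_commutatorMap (hG s)
  set C := B ⊓ (commutatorMap A s).ker
  set D := B.map (commutatorMap A s)
  have hCB : C < B := lt_of_le_not_ge inf_le_left fun h => hsB (h.trans inf_le_right)
  have hDB : D < B := by
    refine SetLike.lt_iff_le_and_exists.2 ⟨?_, c, hcB, fun hcD => hc1 ?_⟩
    · rintro _ ⟨w, hw, rfl⟩
      exact div_mem (hB s w hw) hw
    · exact Subgroup.disjoint_def.1 hdisj (mem_ker_commutatorMap.2 hsc)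
        (Subgroup.map_le_range _ _ hcD)
  have hC (g : G) : ∀ x ∈ C, g • x ∈ C := fun _ =>
    smul_mem_inf_ker_commutatorMap (Commute.all s g) (hB g)
  have hD (g : G) : ∀ x ∈ D, g • x ∈ D := fun _ =>
    smul_mem_map_commutatorMap (Commute.all s g) (hB g)
  obtain ⟨c', hc', hc'fix⟩ := ih _ (hn ▸ Subgroup.card_lt_card_of_lt hCB) C hC rfl
  obtain ⟨d, hd, hdfix⟩ := ih _ (hn ▸ Subgroup.card_lt_card_of_lt hDB) D hD rfl
  refine ⟨c' * d, mul_mem (hCB.le hc') (hDB.le hd), fun g hg => ?_⟩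
  have hCD : Disjoint C D := hdisj.mono inf_le_right (Subgroup.map_le_range _ _)
  obtain ⟨hgc, hgd⟩ := smul_eq_and_smul_eq_of_smul_mul_eq hCD (hC g) (hD g) hc' hd hg
  exact (le_inf_ker_sup_map_commutatorMap (hG s) (hB s)).trans
    (sup_le (hc'fix g hgc) (hdfix g hgd))

end CommGroup

end MulDistribMulAction

open MulDistribMulAction in
theorem stmt_9 {G A : Type*} [CommGroup G] [Fintype G] [CommGroup A] [Fintype A]
    [MulDistribMulAction G A] [FaithfulSMul G A]
    (hcop : Nat.Coprime (Fintype.card G) (Fintype.card A)) :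
    ∃ a : A, ∀ g : G, g • a = a → g = 1 := by
  have hG (g : G) : (orderOf g).Coprime (Nat.card A) := by
    rw [Nat.card_eq_fintype_card]
    exact hcop.coprime_dvd_left orderOf_dvd_card
  obtain ⟨a, -, ha⟩ := exists_mem_forall_smul_eq_le_ker hG ⊤ fun _ _ _ => Subgroup.mem_top _
  refine ⟨a, fun g hg => FaithfulSMul.eq_of_smul_eq_smul (α := A) fun x => ?_⟩
  rw [one_smul, ← mem_ker_commutatorMap]
  exact ha g hg (Subgroup.mem_top x)
end

section
/- Let G be a finite group, A a minimal normal subgroup of G which is an abelian q-group for a prime q, and suppose A is a Sylow q-subgroup of G. Then for every x ∈ G \ C_G(A), the prime q divides the size of the conjugacy class of x in G. -/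
/-!
A normal `q`-subgroup lies in every Sylow `q`-subgroup. If `q` did not divide `|G : C_G(x)|`,
a Sylow `q`-subgroup of `C_G(x)` would be Sylow in `G`, so `C_G(x)` would contain `A` and `x` would
centralize `A`.
-/

lemma Subgroup.exists_sylow_le_of_not_dvd_index {G : Type*} [Group G] [Finite G] {p : ℕ}
    [Fact p.Prime] {H : Subgroup G} (hH : ¬ p ∣ H.index) : ∃ P : Sylow p G, (P : Subgroup G) ≤ H := by
  obtain ⟨P⟩ := (inferInstance : Nonempty (Sylow p H))
  have hindex : ¬ p ∣ (P.map H.subtype).index := by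
    rw [Subgroup.index_map_subtype]
    exact Nat.Prime.not_dvd_mul Fact.out P.not_dvd_index hH
  exact ⟨(P.isPGroup'.map H.subtype).toSylow hindex, Subgroup.map_subtype_le _⟩

lemma IsPGroup.le_of_normal_of_not_dvd_index {G : Type*} [Group G] [Finite G] {p : ℕ}
    [Fact p.Prime] {N H : Subgroup G} [N.Normal] (hN : IsPGroup p N) (hH : ¬ p ∣ H.index) :
    N ≤ H := by
  obtain ⟨P, hPH⟩ := H.exists_sylow_le_of_not_dvd_index hH
  exact (hN.le_sylow_of_normal P).trans hPH

theorem stmt_13_general {G : Type*} [Group G] [Fintype G] (q : ℕ) (hq : q.Prime)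
    (A : Subgroup G) [A.Normal]
    (hp : IsPGroup q A)
    (x : G) (hx : x ∉ Subgroup.centralizer (A : Set G)) :
    q ∣ (Subgroup.centralizer ({x} : Set G)).index := by
  have : Fact q.Prime := ⟨hq⟩
  by_contra hindex
  have hA : A ≤ Subgroup.centralizer {x} := hp.le_of_normal_of_not_dvd_index hindex
  exact hx fun a ha => Subgroup.mem_centralizer_singleton_iff.mp (hA ha)

theorem stmt_13 {G : Type*} [Group G] [Fintype G] (q : ℕ) (hq : q.Prime)
    (A : Subgroup G) [A.Normal] (hA : A ≠ ⊥) (hcomm : IsMulCommutative A)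
    (hmin : ∀ K : Subgroup G, K.Normal → K ≤ A → K = ⊥ ∨ K = A)
    (hp : IsPGroup q A) (hsyl : ¬ q ∣ A.index)
    (x : G) (hx : x ∉ Subgroup.centralizer (A : Set G)) :
    q ∣ (Subgroup.centralizer ({x} : Set G)).index :=
  stmt_13_general q hq A hp x hx
end

section
/- Let G be a finite group, Q a Sylow q-subgroup of G, and A an abelian normal q'-subgroup of G (q does not divide |A|). Then A = [A,Q] × C_A(Q), and if moreover QA is normal in G so that every G-conjugate of Q has the form Q^a for some a ∈ A, then [A,Q] is a normal subgroup of G. -/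
/-!
The norm map `τ a = ∏_{x ∈ Q} x a x⁻¹` of the conjugation action of `Q` on the abelian group `A`
is an endomorphism with image in `C_A(Q)`, kernel containing `[A, Q]`, and `τ a ≡ a ^ |Q|`
modulo `[A, Q]`. As `a ↦ a ^ |Q|` is bijective on `A`, this gives `A = [A, Q] C_A(Q)` and
`[A, Q] ∩ C_A(Q) = 1`. If `QA` is normal, the Frattini argument gives `G = N_G(Q) QA`, and each
of `N_G(Q)`, `Q` and `A` normalizes `[A, Q]`.
-/

open Subgroup
open scoped IsMulCommutative commutatorElement

namespace Subgroup

section conjNorm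

variable {G : Type*} [Group G] (A : Subgroup G) [A.Normal] [IsMulCommutative A]
  (Q : Subgroup G) [Fintype Q]

noncomputable def conjNorm : A →* A :=
  ∏ x : Q, (MulAut.conjNormal (x : G)).toMonoidHom

variable {A Q}

theorem conjNorm_apply (a : A) : conjNorm A Q a = ∏ x : Q, MulAut.conjNormal (x : G) a := by
  simp [conjNorm]

theorem conjNorm_conjNormal (y : Q) (a : A) :
    conjNorm A Q (MulAut.conjNormal (y : G) a) = conjNorm A Q a := by
  simp only [conjNorm_apply, ← MulAut.mul_apply, ← map_mul, ← coe_mul]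
  exact Fintype.prod_equiv (Equiv.mulRight y) _ _ fun _ => rfl

theorem conjNormal_conjNorm (y : Q) (a : A) :
    MulAut.conjNormal (y : G) (conjNorm A Q a) = conjNorm A Q a := by
  simp only [conjNorm_apply, map_prod, ← MulAut.mul_apply, ← map_mul, ← coe_mul]
  exact Fintype.prod_equiv (Equiv.mulLeft y) _ _ fun _ => rfl

theorem conjNorm_mem_centralizer (a : A) : (conjNorm A Q a : G) ∈ centralizer (Q : Set G) :=
  fun y hy => mul_inv_eq_iff_eq_mul.mp (congrArg Subtype.val (conjNormal_conjNorm ⟨y, hy⟩ a))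

theorem conjNorm_of_mem_centralizer {a : A} (ha : (a : G) ∈ centralizer (Q : Set G)) :
    conjNorm A Q a = a ^ Nat.card Q := by
  have hfix (x : Q) : MulAut.conjNormal (x : G) a = a := by
    ext
    rw [MulAut.conjNormal_apply, ha x x.2, mul_inv_cancel_right]
  simp [conjNorm_apply, hfix, Nat.card_eq_fintype_card]

theorem commutator_le_map_ker_conjNorm : ⁅A, Q⁆ ≤ (conjNorm A Q).ker.map A.subtype := by
  refine commutator_le.mpr fun g hg h hh =>
    ⟨⟨g, hg⟩ * MulAut.conjNormal h (⟨g, hg⟩ : A)⁻¹, ?_, ?_⟩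
  · rw [SetLike.mem_coe, MonoidHom.mem_ker, map_mul, conjNorm_conjNormal ⟨h, hh⟩, map_inv,
      mul_inv_cancel]
  · simp [MulAut.conjNormal_apply, commutatorElement_def, mul_assoc]

theorem conjNorm_mul_inv_pow_mem_commutator (a : A) :
    (conjNorm A Q a : G) * ((a : G) ^ Nat.card Q)⁻¹ ∈ ⁅A, Q⁆ := by
  have hprod :
      conjNorm A Q a * (a ^ Nat.card Q)⁻¹ = ∏ x : Q, MulAut.conjNormal (x : G) a * a⁻¹ := by
    rw [conjNorm_apply, Finset.prod_mul_distrib, Finset.prod_const, Finset.card_univ,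
      Nat.card_eq_fintype_card, inv_pow]
  have hcomm (x : Q) : ((MulAut.conjNormal (x : G) a * a⁻¹ : A) : G) = ⁅(x : G), (a : G)⁆ := by
    simp [MulAut.conjNormal_apply, commutatorElement_def]
  have hmem : conjNorm A Q a * (a ^ Nat.card Q)⁻¹ ∈ ⁅A, Q⁆.subgroupOf A := by
    rw [hprod]
    refine prod_mem fun x _ => ?_
    rw [mem_subgroupOf, hcomm, commutator_comm]
    exact commutator_mem_commutator x.2 a.2
  simpa [mem_subgroupOf] using hmem

end conjNorm

section Coprime

variable {G : Type*} [Group G] {A : Subgroup G} [A.Normal] [IsMulCommutative A]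
  {Q : Subgroup G} [Finite Q]

theorem commutator_sup_inf_centralizer_eq (hcop : (Nat.card A).Coprime (Nat.card Q)) :
    ⁅A, Q⁆ ⊔ (A ⊓ centralizer (Q : Set G)) = A := by
  have := Fintype.ofFinite Q
  refine le_antisymm (sup_le (commutator_le_left A Q) inf_le_left) fun a ha => ?_
  obtain ⟨b, hb⟩ := (powCoprime hcop).surjective ⟨a, ha⟩
  have ha' : a = ((conjNorm A Q b : G) * ((b : G) ^ Nat.card Q)⁻¹)⁻¹ * conjNorm A Q b := by
    have hb' : (b : G) ^ Nat.card Q = a := by simpa using congrArg Subtype.val hb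
    rw [← hb']
    group
  rw [ha']
  exact mul_mem (mem_sup_left (inv_mem (conjNorm_mul_inv_pow_mem_commutator b)))
    (mem_sup_right ⟨(conjNorm A Q b).2, conjNorm_mem_centralizer b⟩)

theorem commutator_inf_inf_centralizer_eq_bot (hcop : (Nat.card A).Coprime (Nat.card Q)) :
    ⁅A, Q⁆ ⊓ (A ⊓ centralizer (Q : Set G)) = ⊥ := by
  have := Fintype.ofFinite Q
  refine eq_bot_iff.mpr fun a ⟨haK, haA, haC⟩ => ?_
  obtain ⟨b, hb, rfl⟩ := commutator_le_map_ker_conjNorm haK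
  have hpow : powCoprime hcop b = powCoprime hcop 1 := by
    rw [powCoprime_one, ← hb, eq_comm]
    exact conjNorm_of_mem_centralizer haC
  simp [(powCoprime hcop).injective hpow]

end Coprime

theorem normalizer_inf_normalizer_le_normalizer_commutator {G : Type*} [Group G]
    (H₁ H₂ : Subgroup G) :
    normalizer (H₁ : Set G) ⊓ normalizer (H₂ : Set G) ≤
      normalizer ((⁅H₁, H₂⁆ : Subgroup G) : Set G) :=
  fun g ⟨h₁, h₂⟩ => mem_normalizer_iff_map_conj_eq.mpr <| by
    rw [map_commutator, mem_normalizer_iff_map_conj_eq.mp h₁, mem_normalizer_iff_map_conj_eq.mp h₂]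

end Subgroup

theorem Sylow.commutator_normal_of_sup_normal {G : Type*} [Group G] [Finite G] {p : ℕ}
    [Fact p.Prime] (P : Sylow p G) (A : Subgroup G) [A.Normal]
    (hPA : ((P : Subgroup G) ⊔ A).Normal) : ⁅A, (P : Subgroup G)⁆.Normal := by
  have := hPA
  rw [← normalizer_eq_top_iff, eq_top_iff,
    ← P.normalizer_sup_eq_top' (N := (P : Subgroup G) ⊔ A) le_sup_left]
  refine sup_le ?_ (sup_le (normalizer_commutator_ge_right _ _) (normalizer_commutator_ge_left _ _))
  exact (le_inf le_normalizer_of_normal le_rfl).trans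
    (Subgroup.normalizer_inf_normalizer_le_normalizer_commutator A P)

theorem stmt_14 {G : Type*} [Group G] [Fintype G] (q : ℕ) (hq : q.Prime)
    (Q : Sylow q G) (A : Subgroup G) [A.Normal] (hcomm : IsMulCommutative A)
    (hq' : ¬ q ∣ Nat.card A) :
    (⁅A, (Q : Subgroup G)⁆ ⊔ (A ⊓ Subgroup.centralizer (Q : Set G)) = A ∧
      ⁅A, (Q : Subgroup G)⁆ ⊓ (A ⊓ Subgroup.centralizer (Q : Set G)) = ⊥) ∧
    (((Q : Subgroup G) ⊔ A).Normal → ⁅A, (Q : Subgroup G)⁆.Normal) := by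
  have := Fact.mk hq
  obtain ⟨k, hk⟩ := IsPGroup.iff_card.mp Q.2
  have hcop : (Nat.card A).Coprime (Nat.card (Q : Subgroup G)) :=
    hk ▸ ((Nat.Prime.coprime_iff_not_dvd hq).mpr hq').symm.pow_right k
  exact ⟨⟨commutator_sup_inf_centralizer_eq hcop, commutator_inf_inf_centralizer_eq_bot hcop⟩,
    Q.commutator_normal_of_sup_normal A⟩
end
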